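/- For each fixed ℓ ∈ ℕ₀, the set {u(ℓ) + u(k) : k ∈ ℕ₀} equals {u(k) : k ∈ ℕ₀}; i.e., translation by u(ℓ) permutes the set of coset representatives u(ℕ₀). -/

import Mathlib

/-- The single-digit representative: for `n` with base-`p` digits `a_0, …, a_{c-1}`,
`ub(n) = (a_0·ζ_0 + a_1·ζ_1 + ⋯ + a_{c-1}·ζ_{c-1})·𝔭⁻¹`. -/
noncomputable def ubMap {K : Type*} [Field K] (p c : ℕ) (ζ : Fin c → K) (pp : K)
    (n : ℕ) : K :=
  (∑ i : Fin c, ((n / p ^ (i : ℕ)) % p : ℕ) • ζ i) * pp⁻¹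

/-- The digit-wise coset-representative map: for `n` with base-`q` digits
`b_0, b_1, …, b_s`, `u(n) = ub(b_0) + ub(b_1)·𝔭⁻¹ + ⋯ + ub(b_s)·𝔭⁻ˢ`. -/
noncomputable def uMap {K : Type*} [Field K] (q : ℕ) (pp : K) (ub : ℕ → K) (n : ℕ) : K :=
  ((Nat.digits q n).zipIdx.map (fun ib => ub ib.1 * pp⁻¹ ^ ib.2)).sum

/-!
Both maps are read off digit by digit: `ub(n) = (n mod p)·ζ_0·𝔭⁻¹ + ub'(n / p)`, where `ub'` uses
the shifted family `ζ_1, …, ζ_{c-1}`, and `u(n) = ub(n mod q) + 𝔭⁻¹·u(n / q)`. Since `K` has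
characteristic `p`, the digit `(a + b) mod p` contributes what the digits `a` and `b` contribute
together, so induction on the number of digits shows that the values of `ub` below `q`, and then
all values of `u`, are closed under addition. As `p • x = 0`, the set `u(ℕ)` is also closed under
negation: it is an additive subgroup of `K`, and translation by one of its elements permutes it.
-/

open Set

lemma AddSubmonoid.neg_mem_of_charP {R : Type*} [Ring R] (p : ℕ) [NeZero p] [CharP R p]
    (S : AddSubmonoid R) {x : R} (hx : x ∈ S) : -x ∈ S := by
  have hneg : -x = (p - 1) • x := by
    rw [eq_comm, ← add_eq_zero_iff_eq_neg, ← succ_nsmul, Nat.sub_add_cancel NeZero.one_le,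
      nsmul_eq_mul, CharP.cast_eq_zero, zero_mul]
  exact hneg ▸ S.nsmul_mem hx _

lemma range_const_add_eq_range_of_charP {α R : Type*} [Ring R] (p : ℕ) [NeZero p] [CharP R p]
    (f : α → R) (hzero : 0 ∈ range f) (hadd : ∀ a b, f a + f b ∈ range f) (l : α) :
    range (fun k => f l + f k) = range f := by
  let S : AddSubmonoid R :=
    { carrier := range f
      add_mem' := by rintro _ _ ⟨a, rfl⟩ ⟨b, rfl⟩; exact hadd a b
      zero_mem' := hzero }
  refine Subset.antisymm (range_subset_iff.2 (hadd l)) ?_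
  rintro _ ⟨k, rfl⟩
  obtain ⟨m, hm⟩ : f k + -f l ∈ S := S.add_mem ⟨k, rfl⟩ (S.neg_mem_of_charP p ⟨l, rfl⟩)
  exact ⟨m, show f l + f m = f k by rw [hm]; abel⟩

section

variable {K : Type*} [Field K]

lemma ubMap_succ (p c : ℕ) (ζ : Fin (c + 1) → K) (pp : K) (n : ℕ) :
    ubMap p (c + 1) ζ pp n
      = (n % p : ℕ) • ζ 0 * pp⁻¹ + ubMap p c (fun i => ζ i.succ) pp (n / p) := by
  simp [ubMap, Fin.sum_univ_succ, pow_succ', Nat.div_div_eq_div_mul, add_mul]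

lemma exists_ubMap_add_eq {p : ℕ} [CharP K p] (hp : 0 < p) (c : ℕ) (ζ : Fin c → K) (pp : K)
    (r s : ℕ) : ∃ t < p ^ c, ubMap p c ζ pp r + ubMap p c ζ pp s = ubMap p c ζ pp t := by
  induction c generalizing r s with
  | zero => exact ⟨0, by simp, by simp [ubMap]⟩
  | succ c ih =>
    obtain ⟨t, ht, hsum⟩ := ih (fun i => ζ i.succ) (r / p) (s / p)
    set d := (r % p + s % p) % p
    have hd : d < p := Nat.mod_lt _ hp
    refine ⟨d + p * t, ?_, ?_⟩
    · calc d + p * t < p * (t + 1) := by linarith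
        _ ≤ p ^ (c + 1) := by rw [pow_succ']; exact Nat.mul_le_mul_left p ht
    · have hmod : (d + p * t) % p = d := by simp [Nat.mod_eq_of_lt hd]
      have hdiv : (d + p * t) / p = t := by
        rw [Nat.add_mul_div_left _ _ hp, Nat.div_eq_of_lt hd, zero_add]
      have hdK : ((d : ℕ) : K) = (r % p : ℕ) + (s % p : ℕ) := by
        rw [← Nat.cast_add]; exact (CharP.cast_eq_mod K p _).symm
      simp only [ubMap_succ, hmod, hdiv, ← hsum, nsmul_eq_mul, hdK]
      ring

@[simp] lemma uMap_zero (q : ℕ) (pp : K) (ub : ℕ → K) : uMap q pp ub 0 = 0 := by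
  simp [uMap]

lemma uMap_eq_add_mul_uMap_div {q : ℕ} (hq : 1 < q) (pp : K) {ub : ℕ → K} (hub : ub 0 = 0)
    (n : ℕ) : uMap q pp ub n = ub (n % q) + pp⁻¹ * uMap q pp ub (n / q) := by
  rcases Nat.eq_zero_or_pos n with rfl | hn
  · simp [hub]
  · simp only [uMap, Nat.digits_def' hq hn, List.zipIdx_cons, List.zipIdx_succ, List.map_cons,
      List.map_map, List.sum_cons, ← List.sum_map_mul_left]
    congr 1
    · simp
    · refine congrArg _ (List.map_congr_left fun x _ => ?_)
      simp only [Function.comp, pow_succ']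
      ring

lemma exists_uMap_add_eq {q : ℕ} (hq : 1 < q) (pp : K) {ub : ℕ → K} (hub0 : ub 0 = 0)
    (hub : ∀ r < q, ∀ s < q, ∃ t < q, ub r + ub s = ub t) (a b : ℕ) :
    ∃ m, uMap q pp ub a + uMap q pp ub b = uMap q pp ub m := by
  induction a using Nat.strong_induction_on generalizing b with
  | _ a ih =>
    rcases Nat.eq_zero_or_pos a with rfl | ha
    · exact ⟨b, by simp⟩
    obtain ⟨t, htq, ht⟩ := hub _ (Nat.mod_lt a (by omega)) _ (Nat.mod_lt b (by omega))
    obtain ⟨m, hm⟩ := ih (a / q) (Nat.div_lt_self ha hq) (b / q)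
    refine ⟨t + q * m, ?_⟩
    have hmod : (t + q * m) % q = t := by simp [Nat.mod_eq_of_lt htq]
    have hdiv : (t + q * m) / q = m := by
      rw [Nat.add_mul_div_left _ _ (by omega), Nat.div_eq_of_lt htq, zero_add]
    rw [uMap_eq_add_mul_uMap_div hq pp hub0 a, uMap_eq_add_mul_uMap_div hq pp hub0 b,
      uMap_eq_add_mul_uMap_div hq pp hub0 (t + q * m), hmod, hdiv, ← ht, ← hm]
    ring

end

theorem range_add_uMap_eq_range_general {K : Type*} [Field K]
    (p : ℕ) [Fact p.Prime] [CharP K p] (c : ℕ) (hc : 0 < c)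
    (q : ℕ) (hq : q = p ^ c)
    (ζ : Fin c → K)
    (pp : K) (ℓ : ℕ) :
    Set.range (fun k : ℕ => uMap q pp (ubMap p c ζ pp) ℓ + uMap q pp (ubMap p c ζ pp) k)
      = Set.range (fun k : ℕ => uMap q pp (ubMap p c ζ pp) k) := by
  have hp : 0 < p := (Fact.out : p.Prime).pos
  have hq1 : 1 < q := hq ▸ Nat.one_lt_pow hc.ne' (Fact.out : p.Prime).one_lt
  refine range_const_add_eq_range_of_charP p _ ⟨0, uMap_zero q pp _⟩ (fun a b => ?_) ℓ
  obtain ⟨m, hm⟩ := exists_uMap_add_eq hq1 pp (by simp [ubMap])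
    (fun r _ s _ => hq ▸ exists_ubMap_add_eq hp c ζ pp r s) a b
  exact ⟨m, hm.symm⟩

/-- For each fixed `ℓ`, the set `{u(ℓ) + u(k) : k ∈ ℕ}` equals `{u(k) : k ∈ ℕ}`:
translation by `u(ℓ)` permutes the set of coset representatives. -/
theorem range_add_uMap_eq_range {K : Type*} [Field K]
    (p : ℕ) [Fact p.Prime] [CharP K p] (c : ℕ) (hc : 0 < c)
    (q : ℕ) (hq : q = p ^ c)
    (ζ : Fin c → K) (hζ0 : ζ ⟨0, hc⟩ = 1)
    (pp : K) (hpp : pp ≠ 0) (ℓ : ℕ) :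
    Set.range (fun k : ℕ => uMap q pp (ubMap p c ζ pp) ℓ + uMap q pp (ubMap p c ζ pp) k)
      = Set.range (fun k : ℕ => uMap q pp (ubMap p c ζ pp) k) :=
  range_add_uMap_eq_range_general p c hc q hq ζ pp ℓ
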